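/- arXiv:2207.11058 — 3 statements merged into one kernel-verified Lean document; each statement's English description precedes it below -/
import Mathlib

section
/- Let (X, ⊤_X) be a locality set, let Q_X be the quiver of X, and let (X_{Q_X}, ⊤_{X_{Q_X}}) be the locality set of Q_X, with φ_X : X → X_{Q_X} the identity map on underlying sets (a locality map since ⊤_X ⊆ ⊤_{X_{Q_X}}). Then (X_{Q_X}, ⊤_{X_{Q_X}}) together with φ_X is a regular hull of (X, ⊤_X): for every regular locality set (X', ⊤') and every locality map ψ : X → X', there is a unique locality map ψ̃ : X_{Q_X} → X' with ψ̃ ∘ φ_X = ψ. -/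
/-- A locality set `(X, ⊤)` is regular if whenever
`(α, β₁), (α₁, β₁), (α₁, β) ∈ ⊤` one also has `(α, β) ∈ ⊤`. -/
def IsRegularLocality {X : Type} (top : X → X → Prop) : Prop :=
  ∀ α β α₁ β₁, top α β₁ → top α₁ β₁ → top α₁ β → top α β

/-- On the disjoint union `X_s ⊔ X_t` of two copies of `X` (`Sum.inl` being the
source copy `X_s` and `Sum.inr` the target copy `X_t`), the relation
`α_t ∼ β_s` whenever `(α, β) ∈ ⊤`. -/
def locSim {X : Type} (top : X → X → Prop) : X ⊕ X → X ⊕ X → Prop :=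
  fun u v => ∃ α β, top α β ∧ u = Sum.inr α ∧ v = Sum.inl β

/-- The vertex set of the quiver of a locality set `(X, ⊤)`: the quotient of
`X_s ⊔ X_t` by the equivalence relation generated by `∼`. -/
def locVertices {X : Type} (top : X → X → Prop) : Type :=
  Quot (locSim top)

/-- The source map of the quiver of a locality set: `s_Q(α)` is the class of `α_s`. -/
def locSrc {X : Type} (top : X → X → Prop) (α : X) : locVertices top :=
  Quot.mk (locSim top) (Sum.inl α)

/-- The target map of the quiver of a locality set: `t_Q(α)` is the class of `α_t`. -/
def locTgt {X : Type} (top : X → X → Prop) (α : X) : locVertices top :=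
  Quot.mk (locSim top) (Sum.inr α)

/-- The locality relation of the locality set of the quiver `Q_X` of a locality
set `(X, ⊤)`: the arrow set of `Q_X` is `X` itself, and
`⊤_{X_{Q_X}} = {(α, β) : t_Q(α) = s_Q(β)}`. -/
def topQX {X : Type} (top : X → X → Prop) : X → X → Prop :=
  fun α β => locTgt top α = locSrc top β

/-!
Regularity makes the set of arrows ending at a vertex an invariant of the equivalence class
defining that vertex; hence in a regular locality set `⊤` coincides with the locality relation
of its own quiver. A locality map `ψ : X → X'` induces a map of quivers `Q_X → Q_{X'}`, so
`t(α) = s(β)` in `Q_X` gives `t(ψ α) = s(ψ β)` in `Q_{X'}`, that is `(ψ α, ψ β) ∈ ⊤'`.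
-/

section

variable {X : Type} (top : X → X → Prop)

theorem isRegularLocality_topQX : IsRegularLocality (topQX top) :=
  fun _ _ _ _ h₁ h₂ h₃ => h₁.trans (h₂.symm.trans h₃)

theorem topQX_of_top {α β : X} (h : top α β) : topQX top α β :=
  Quot.sound ⟨α, β, h, rfl, rfl⟩

theorem topQX_map {X' : Type} {top' : X' → X' → Prop} {ψ : X → X'}
    (hψ : ∀ α β, top α β → top' (ψ α) (ψ β)) {α β : X} (h : topQX top α β) :
    topQX top' (ψ α) (ψ β) :=
  congrArg (Quot.map (Sum.map ψ ψ) fun _ _ ⟨α, β, hαβ, hu, hv⟩ =>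
    ⟨ψ α, ψ β, hψ α β hαβ, congrArg _ hu, congrArg _ hv⟩) h

/-- For regular `top`, the arrows of `Q_X` ending at the vertex represented by an element of
`X_s ⊔ X_t`; `α` itself is inserted so that this also holds for a target `α_t` with no arrow
leaving it. -/
def incomingArrows : X ⊕ X → Set X
  | .inl β => {α | top α β}
  | .inr α => insert α {α' | ∃ β, top α β ∧ top α' β}

variable {top}

theorem incomingArrows_inr_eq_inl (hreg : IsRegularLocality top) {α β : X} (h : top α β) :
    incomingArrows top (.inr α) = incomingArrows top (.inl β) := by
  ext α'
  simp only [incomingArrows, Set.mem_insert_iff, Set.mem_ofPred_eq]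
  constructor
  · rintro (rfl | ⟨β', hαβ', hα'β'⟩)
    exacts [h, hreg α' β α β' hα'β' hαβ' h]
  · exact fun hα'β => Or.inr ⟨β, h, hα'β⟩

theorem top_of_topQX (hreg : IsRegularLocality top) {α β : X} (h : topQX top α β) :
    top α β := by
  have hlift : incomingArrows top (.inr α) = incomingArrows top (.inl β) :=
    congrArg (Quot.lift (incomingArrows top) fun _ _ ⟨_, _, hαβ, hu, hv⟩ =>
      hu ▸ hv ▸ incomingArrows_inr_eq_inl hreg hαβ) h
  have hα : α ∈ incomingArrows top (.inr α) := Set.mem_insert α _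
  rwa [hlift] at hα

end

/-- Let `(X, ⊤_X)` be a locality set and `(X_{Q_X}, ⊤_{X_{Q_X}})` the locality set
of the quiver `Q_X` of `X`, whose underlying set is `X` itself, with
`φ_X : X → X_{Q_X}` the identity map.  Then `(X, ⊤_{X_{Q_X}})` is regular, `φ_X` is
a locality map, and `(X_{Q_X}, ⊤_{X_{Q_X}}, φ_X)` is a regular hull of `(X, ⊤_X)`:
for every regular locality set `(X', ⊤')` and every locality map `ψ : X → X'`,
there is a unique locality map `ψ̃ : X_{Q_X} → X'` with `ψ̃ ∘ φ_X = ψ`. -/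
theorem localitySet_of_quiver_is_regular_hull {X : Type} (top : X → X → Prop) :
    IsRegularLocality (topQX top) ∧
    (∀ α β, top α β → topQX top α β) ∧
    (∀ (X' : Type) (top' : X' → X' → Prop), IsRegularLocality top' →
      ∀ ψ : X → X', (∀ α β, top α β → top' (ψ α) (ψ β)) →
        ∃! ψt : X → X',
          (∀ α β, topQX top α β → top' (ψt α) (ψt β)) ∧
          ψt ∘ (id : X → X) = ψ) := by
  refine ⟨isRegularLocality_topQX top, fun _ _ => topQX_of_top top,
    fun X' top' hreg ψ hψ => ⟨ψ, ⟨fun _ _ h => top_of_topQX hreg (topQX_map top hψ h), rfl⟩,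
      fun _ hψt => hψt.2⟩⟩
end

section
/- Let Q = (Q0, Q1, s, t) be a quiver, let (X_Q, ⊤_{X_Q}) be the locality set of Q, and let Q_{X_Q} = (Q0', Q1', s', t') be the quiver of X_Q. Then Q1' = Q1, and for all arrows α, β ∈ Q1 one has t'(α) = s'(β) if and only if t(α) = s(β); consequently the nonempty paths of Q_{X_Q} are exactly the nonempty paths of Q, i.e. the path locality semigroups P_{Q_{X_Q}} and P_Q coincide. -/
section LocalityQuiver

variable {X V : Type} {top : X → X → Prop}

def locVertices.lift (s t : X → V) (h : ∀ α β, top α β → t α = s β) :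
    locVertices top → V :=
  Quot.lift (Sum.elim s t) (by
    rintro _ _ ⟨α, β, hαβ, rfl, rfl⟩
    exact h α β hαβ)

@[simp]
theorem locVertices.lift_locSrc (s t : X → V) (h : ∀ α β, top α β → t α = s β) (α : X) :
    locVertices.lift s t h (locSrc top α) = s α :=
  rfl

@[simp]
theorem locVertices.lift_locTgt (s t : X → V) (h : ∀ α β, top α β → t α = s β) (α : X) :
    locVertices.lift s t h (locTgt top α) = t α :=
  rfl

theorem locTgt_eq_locSrc_of_top {α β : X} (h : top α β) : locTgt top α = locSrc top β :=
  Quot.sound ⟨α, β, h, rfl, rfl⟩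

end LocalityQuiver

/-- The converse direction holds because `s` and `t` descend to a map `Q0' → Q0`. -/
theorem locTgt_eq_locSrc_iff {Q0 Q1 : Type} (s t : Q1 → Q0) (α β : Q1) :
    locTgt (fun a b : Q1 => t a = s b) α = locSrc (fun a b : Q1 => t a = s b) β
      ↔ t α = s β := by
  refine ⟨fun h => ?_, locTgt_eq_locSrc_of_top (top := fun a b => t a = s b)⟩
  simpa using congrArg (locVertices.lift s t fun _ _ => id) h

/-- Let `Q = (Q0, Q1, s, t)` be a quiver, `(X_Q, ⊤_{X_Q})` its locality set
(`X_Q = Q1`, `⊤_{X_Q} = {(α,β) : t α = s β}`), and `Q_{X_Q} = (Q0', Q1', s', t')`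
the quiver of `X_Q`, whose arrow set `Q1'` is `Q1` itself.  Then for all arrows
`α, β ∈ Q1` one has `t'(α) = s'(β)` iff `t(α) = s(β)`; consequently the nonempty
paths of `Q_{X_Q}` are exactly the nonempty paths of `Q`, and the path locality
semigroups coincide: the locality relations `t'(p) = s'(q)` and `t(p) = s(q)`
on nonempty paths agree (concatenation being the same in both). -/
theorem paths_of_derived_quiver_eq {Q0 Q1 : Type} (s t : Q1 → Q0) :
    (∀ α β : Q1,
      (locTgt (fun a b : Q1 => t a = s b) α = locSrc (fun a b : Q1 => t a = s b) β)
        ↔ t α = s β) ∧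
    (∀ l : List Q1,
      l.Chain' (fun a b =>
          locTgt (fun a b : Q1 => t a = s b) a = locSrc (fun a b : Q1 => t a = s b) b)
        ↔ l.Chain' (fun a b => t a = s b)) ∧
    (∀ (l m : List Q1) (hl : l ≠ []) (hm : m ≠ []),
      (locTgt (fun a b : Q1 => t a = s b) (l.getLast hl)
          = locSrc (fun a b : Q1 => t a = s b) (m.head hm))
        ↔ t (l.getLast hl) = s (m.head hm)) :=
  ⟨locTgt_eq_locSrc_iff s t, fun _ => List.IsChain.iff (locTgt_eq_locSrc_iff s t),
    fun _ _ _ _ => locTgt_eq_locSrc_iff s t _ _⟩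
end

section
/- Let Q = (Q0, Q1, s, t) be a full quiver and let Q_{X_Q} = (Q0', Q1', s', t') be the quiver of the locality set X_Q of Q, so that Q1' = Q1. Then Q_{X_Q} is isomorphic to Q: there is a bijection f : Q0 → Q0' such that for all x, y ∈ Q0 and α ∈ Q1, one has (s(α) = x and t(α) = y) if and only if (s'(α) = f(x) and t'(α) = f(y)). -/
/-- A quiver is full if every vertex lies in `im(s) ∪ im(t)`, and every vertex
to which two or more arrows are attached lies in `im(s) ∩ im(t)`. -/
def IsFullQuiver {V A : Type} (s t : A → V) : Prop :=
  (∀ v : V, (∃ a, s a = v) ∨ (∃ a, t a = v)) ∧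
  (∀ v : V, (∃ a b : A, a ≠ b ∧ (s a = v ∨ t a = v) ∧ (s b = v ∨ t b = v)) →
    ((∃ a, s a = v) ∧ (∃ a, t a = v)))

/-!
The inverse isomorphism sends the class of `α_s` to `s(α)` and that of `α_t` to `t(α)`; this
respects the gluing `α_t ∼ β_s ⇔ t(α) = s(β)`, and it is onto since every vertex is an endpoint.
For injectivity, if two distinct arrows share their source `v`, fullness gives an arrow `γ`
entering `v`, and both sources are glued to `γ_t`; dually for shared targets.
-/

/-- `⊤_{X_Q}` for the quiver `Q = (V, A, s, t)`. -/
abbrev quiverLocality {V A : Type} (s t : A → V) : A → A → Prop :=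
  fun α β => t α = s β

theorem locTgt_eq_locSrc {X : Type} (top : X → X → Prop) {α β : X} (h : top α β) :
    locTgt top α = locSrc top β :=
  Quot.sound ⟨α, β, h, rfl, rfl⟩

section Quiver

variable {V A : Type} (s t : A → V)

def locVerticesToVertex : locVertices (quiverLocality s t) → V :=
  Quot.lift (Sum.elim s t) (by rintro _ _ ⟨α, β, h, rfl, rfl⟩; exact h)

@[simp]
theorem locVerticesToVertex_locSrc (α : A) :
    locVerticesToVertex s t (locSrc (quiverLocality s t) α) = s α :=
  rfl

@[simp]
theorem locVerticesToVertex_locTgt (α : A) :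
    locVerticesToVertex s t (locTgt (quiverLocality s t) α) = t α :=
  rfl

variable {s t}

theorem locVerticesToVertex_surjective (hcover : ∀ v : V, (∃ a, s a = v) ∨ (∃ a, t a = v)) :
    Function.Surjective (locVerticesToVertex s t) := by
  intro v
  rcases hcover v with ⟨α, rfl⟩ | ⟨α, rfl⟩
  · exact ⟨_, locVerticesToVertex_locSrc s t α⟩
  · exact ⟨_, locVerticesToVertex_locTgt s t α⟩

theorem locSrc_eq_locSrc_of_isFullQuiver (hfull : IsFullQuiver s t) {α β : A} (h : s α = s β) :
    locSrc (quiverLocality s t) α = locSrc (quiverLocality s t) β := by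
  by_cases hαβ : α = β
  · rw [hαβ]
  obtain ⟨-, γ, hγ⟩ := hfull.2 (s α) ⟨α, β, hαβ, .inl rfl, .inl h.symm⟩
  calc locSrc (quiverLocality s t) α = locTgt _ γ :=
      (locTgt_eq_locSrc (quiverLocality s t) hγ).symm
    _ = locSrc _ β := locTgt_eq_locSrc _ (hγ.trans h)

theorem locTgt_eq_locTgt_of_isFullQuiver (hfull : IsFullQuiver s t) {α β : A} (h : t α = t β) :
    locTgt (quiverLocality s t) α = locTgt (quiverLocality s t) β := by
  by_cases hαβ : α = β
  · rw [hαβ]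
  obtain ⟨⟨γ, hγ⟩, -⟩ := hfull.2 (t α) ⟨α, β, hαβ, .inr rfl, .inr h.symm⟩
  calc locTgt (quiverLocality s t) α = locSrc _ γ := locTgt_eq_locSrc _ hγ.symm
    _ = locTgt _ β :=
      (locTgt_eq_locSrc (quiverLocality s t) (h.symm.trans hγ.symm)).symm

theorem locVerticesToVertex_injective (hfull : IsFullQuiver s t) :
    Function.Injective (locVerticesToVertex s t) := by
  intro u v
  refine Quot.induction_on₂ u v ?_
  rintro (α | α) (β | β) h
  · exact locSrc_eq_locSrc_of_isFullQuiver hfull h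
  · exact (locTgt_eq_locSrc (quiverLocality s t) h.symm).symm
  · exact locTgt_eq_locSrc (quiverLocality s t) h
  · exact locTgt_eq_locTgt_of_isFullQuiver hfull h

theorem locVerticesToVertex_bijective (hfull : IsFullQuiver s t) :
    Function.Bijective (locVerticesToVertex s t) :=
  ⟨locVerticesToVertex_injective hfull, locVerticesToVertex_surjective hfull.1⟩

end Quiver

/-- Let `Q = (Q0, Q1, s, t)` be a full quiver and `Q_{X_Q} = (Q0', Q1', s', t')`
the quiver of the locality set `X_Q` of `Q`, so `Q1' = Q1`.  Then `Q_{X_Q}` is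
isomorphic to `Q`: there is a bijection `f : Q0 → Q0'` such that for all
`x, y ∈ Q0` and `α ∈ Q1`, one has `s(α) = x` and `t(α) = y` iff
`s'(α) = f(x)` and `t'(α) = f(y)`. -/
theorem full_quiver_iso_derived_quiver {Q0 Q1 : Type} (s t : Q1 → Q0)
    (hfull : IsFullQuiver s t) :
    ∃ f : Q0 → locVertices (fun α β : Q1 => t α = s β),
      Function.Bijective f ∧
      ∀ (x y : Q0) (α : Q1),
        (s α = x ∧ t α = y) ↔
        (locSrc (fun α β : Q1 => t α = s β) α = f x ∧
         locTgt (fun α β : Q1 => t α = s β) α = f y) := by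
  let e := Equiv.ofBijective _ (locVerticesToVertex_bijective hfull)
  refine ⟨e.symm, e.symm.bijective, fun x y α => ?_⟩
  simp only [Equiv.eq_symm_apply, e, Equiv.ofBijective_apply, locVerticesToVertex_locSrc,
    locVerticesToVertex_locTgt]
end
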